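/- arXiv:2410.11599 — 3 statements merged into one kernel-verified Lean document; each statement's English description precedes it below -/
import Mathlib

section
/- For two elements v, w ∈ ℤ³, v ∼ w (Hurwitz equivalence) if and only if Δ(v) = Δ(w) and d(v) = d(w). -/
/-- Alternating sum `Δ(v) = Σ (-1)^i * v i` (0-indexed; `(-1)^(i-1) a_i` in 1-indexed terms). -/
def Delta {m : ℕ} (v : Fin m → ℤ) : ℤ :=
  ∑ i : Fin m, (-1 : ℤ) ^ (i : ℕ) * v i

/-- `d(v)`: the (nonnegative) gcd of all pairwise differences of the entries of `v`;
for nonempty `v` this equals `gcd {v i - v 0 : i}`. -/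
def dgcd {m : ℕ} (v : Fin m → ℤ) : ℤ :=
  Finset.univ.gcd (fun p : Fin m × Fin m => v p.1 - v p.2)

/-- `M(v)_N`: the multiset of residues of the entries of `v` modulo `N`
(for `N = 0` this is the multiset of the entries themselves). -/
def resM {m : ℕ} (v : Fin m → ℤ) (N : ℤ) : Multiset ℤ :=
  (Finset.univ.val : Multiset (Fin m)).map (fun i => v i % N)

/-- The Hurwitz move `v·σ_i` (0-indexed `i`). -/
def sigmaAct {m : ℕ} (i : Fin (m - 1)) (v : Fin m → ℤ) : Fin m → ℤ :=
  have h : (i : ℕ) < m - 1 := i.isLt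
  fun j =>
    if (j : ℕ) = (i : ℕ) then v ⟨(i : ℕ) + 1, by omega⟩
    else if (j : ℕ) = (i : ℕ) + 1 then
      2 * v ⟨(i : ℕ) + 1, by omega⟩ - v ⟨(i : ℕ), by omega⟩
    else v j

/-- The inverse Hurwitz move `v·σ_i⁻¹` (0-indexed `i`). -/
def sigmaInvAct {m : ℕ} (i : Fin (m - 1)) (v : Fin m → ℤ) : Fin m → ℤ :=
  have h : (i : ℕ) < m - 1 := i.isLt
  fun j =>
    if (j : ℕ) = (i : ℕ) then 2 * v ⟨(i : ℕ), by omega⟩ - v ⟨(i : ℕ) + 1, by omega⟩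
    else if (j : ℕ) = (i : ℕ) + 1 then v ⟨(i : ℕ), by omega⟩
    else v j

/-- The virtual move `v·τ_i`: swap the `i`-th and `(i+1)`-st entries (0-indexed `i`). -/
def tauAct {m : ℕ} (i : Fin (m - 1)) (v : Fin m → ℤ) : Fin m → ℤ :=
  have h : (i : ℕ) < m - 1 := i.isLt
  fun j =>
    if (j : ℕ) = (i : ℕ) then v ⟨(i : ℕ) + 1, by omega⟩
    else if (j : ℕ) = (i : ℕ) + 1 then v ⟨(i : ℕ), by omega⟩
    else v j

/-- Hurwitz equivalence: the equivalence relation on `ℤ^m` generated by `v ∼ v·σ_i`. -/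
def HurwitzEquiv {m : ℕ} : (Fin m → ℤ) → (Fin m → ℤ) → Prop :=
  Relation.EqvGen (fun v w => ∃ i : Fin (m - 1), w = sigmaAct i v)

/-- A letter of a braid word: an index `i` and a sign (`true` = `σ_i`, `false` = `σ_i⁻¹`). -/
abbrev BraidLetter (m : ℕ) := Fin (m - 1) × Bool

/-- Action of a single braid letter. -/
def braidLetterAct {m : ℕ} (l : BraidLetter m) (v : Fin m → ℤ) : Fin m → ℤ :=
  if l.2 then sigmaAct l.1 v else sigmaInvAct l.1 v

/-- Action `v·β` of a braid word (letters applied in order). -/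
def braidWordAct {m : ℕ} (β : List (BraidLetter m)) (v : Fin m → ℤ) : Fin m → ℤ :=
  β.foldl (fun w l => braidLetterAct l w) v

/-- The transposition `(i, i+1)` of `Fin m` associated to the index `i`. -/
def letterPerm {m : ℕ} (i : Fin (m - 1)) : Equiv.Perm (Fin m) :=
  have h : (i : ℕ) < m - 1 := i.isLt
  Equiv.swap ⟨(i : ℕ), by omega⟩ ⟨(i : ℕ) + 1, by omega⟩

/-- The underlying permutation `π_β` of a braid word: the product, composed in
the same order as the letters are applied, of the transpositions `(i, i+1)`. -/
def braidWordPerm {m : ℕ} (β : List (BraidLetter m)) : Equiv.Perm (Fin m) :=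
  β.foldl (fun p l => letterPerm l.1 * p) 1

/-- Pure-braid Hurwitz equivalence: related by a braid word with trivial
underlying permutation. -/
def PureEquiv {m : ℕ} (v w : Fin m → ℤ) : Prop :=
  ∃ β : List (BraidLetter m), braidWordAct β v = w ∧ braidWordPerm β = 1

/-- A letter of a virtual braid word: `(i, none)` = `τ_i`, `(i, some true)` = `σ_i`,
`(i, some false)` = `σ_i⁻¹`. -/
abbrev VBraidLetter (m : ℕ) := Fin (m - 1) × Option Bool

/-- Action of a single virtual braid letter. -/
def vletterAct {m : ℕ} (l : VBraidLetter m) (v : Fin m → ℤ) : Fin m → ℤ :=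
  match l.2 with
  | none => tauAct l.1 v
  | some true => sigmaAct l.1 v
  | some false => sigmaInvAct l.1 v

/-- Action `v·β` of a virtual braid word (letters applied in order). -/
def vwordAct {m : ℕ} (β : List (VBraidLetter m)) (v : Fin m → ℤ) : Fin m → ℤ :=
  β.foldl (fun w l => vletterAct l w) v

/-- The underlying permutation `π_β` of a virtual braid word. -/
def vwordPerm {m : ℕ} (β : List (VBraidLetter m)) : Equiv.Perm (Fin m) :=
  β.foldl (fun p l => letterPerm l.1 * p) 1

/-- Virtual braid equivalence: `w = v·β` for some virtual braid word `β`. -/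
def VirtualEquiv {m : ℕ} (v w : Fin m → ℤ) : Prop :=
  ∃ β : List (VBraidLetter m), vwordAct β v = w

/-- Virtual-pure-braid equivalence: related by a virtual braid word with trivial
underlying permutation. -/
def VPureEquiv {m : ℕ} (v w : Fin m → ℤ) : Prop :=
  ∃ β : List (VBraidLetter m), vwordAct β v = w ∧ vwordPerm β = 1

/-! Write `v = (a, a + x, a + y)`. The moves act on the differences by
`σ₀ : (x, y) ↦ (x, y - x)` and `σ₁ : (x, y) ↦ (y, 2y - x)`, so they can run the Euclidean
algorithm on `(x, y)` and bring `v` to `(a', a' + g, a')` with `g ≥ 0`. Both `Δ` and `d` are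
invariant under every `σᵢ` (for any `m`), and on such a normal form they read `Δ = a' - g`,
`d = g`, so the two invariants determine the normal form. -/

protected theorem HurwitzEquiv.refl {m : ℕ} (v : Fin m → ℤ) : HurwitzEquiv v v :=
  Relation.EqvGen.refl v

protected theorem HurwitzEquiv.symm {m : ℕ} {v w : Fin m → ℤ} (h : HurwitzEquiv v w) :
    HurwitzEquiv w v :=
  Relation.EqvGen.symm _ _ h

protected theorem HurwitzEquiv.trans {m : ℕ} {u v w : Fin m → ℤ} (huv : HurwitzEquiv u v)
    (hvw : HurwitzEquiv v w) : HurwitzEquiv u w :=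
  Relation.EqvGen.trans _ _ _ huv hvw

theorem hurwitzEquiv_sigmaAct {m : ℕ} (i : Fin (m - 1)) (v : Fin m → ℤ) :
    HurwitzEquiv v (sigmaAct i v) :=
  Relation.EqvGen.rel _ _ ⟨i, rfl⟩

theorem HurwitzEquiv.eq_of_sigmaAct_invariant {m : ℕ} {α : Type*} (f : (Fin m → ℤ) → α)
    (hf : ∀ i v, f (sigmaAct i v) = f v) {v w : Fin m → ℤ} (h : HurwitzEquiv v w) :
    f v = f w := by
  induction h with
  | rel v w hvw =>
    obtain ⟨i, rfl⟩ := hvw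
    exact (hf i v).symm
  | refl => rfl
  | symm _ _ _ ih => exact ih.symm
  | trans _ _ _ _ _ ih₁ ih₂ => exact ih₁.trans ih₂

theorem Int.two_mul_sub_modEq_iff {x y b c : ℤ} (hx : x ≡ b [ZMOD c]) :
    2 * x - y ≡ b [ZMOD c] ↔ y ≡ b [ZMOD c] := by
  rw [Int.modEq_iff_dvd] at hx ⊢
  rw [Int.modEq_iff_dvd, show b - (2 * x - y) = 2 * (b - x) - (b - y) by ring,
    dvd_sub_right (hx.mul_left 2)]

section sigmaAct

variable {m : ℕ} (i : Fin (m - 1)) (v : Fin m → ℤ)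

-- Only the entries `i`, `i + 1` change, and their difference `a_i - a_{i+1}` is preserved.
theorem Delta_sigmaAct : Delta (sigmaAct i v) = Delta v := by
  have hi : (i : ℕ) + 1 < m := by omega
  rw [← sub_eq_zero, Delta, Delta, ← Finset.sum_sub_distrib]
  rw [Fintype.sum_eq_add ⟨i, by omega⟩ ⟨i + 1, hi⟩ (by simp [Fin.ext_iff])]
  · simp [sigmaAct, pow_succ]
    ring
  · rintro j ⟨hj₀, hj₁⟩
    have h₀ : (j : ℕ) ≠ i := fun h => hj₀ (Fin.ext h)
    have h₁ : (j : ℕ) ≠ i + 1 := fun h => hj₁ (Fin.ext h)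
    simp [sigmaAct, h₀, h₁]

theorem modEq_sigmaAct_iff {b c : ℤ} :
    (∀ j, sigmaAct i v j ≡ b [ZMOD c]) ↔ ∀ j, v j ≡ b [ZMOD c] := by
  have hi₀ : (i : ℕ) < m := by omega
  have hi : (i : ℕ) + 1 < m := by omega
  constructor
  · intro h j
    have h₀ : v ⟨i + 1, hi⟩ ≡ b [ZMOD c] := by simpa [sigmaAct] using h ⟨i, hi₀⟩
    have h₁ := h ⟨i + 1, hi⟩
    simp only [sigmaAct, if_neg (Nat.succ_ne_self _), if_true] at h₁
    have hj := h j
    simp only [sigmaAct] at hj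
    split_ifs at hj with hj₀ hj₁
    · obtain rfl : j = ⟨i, hi₀⟩ := Fin.ext hj₀
      exact (Int.two_mul_sub_modEq_iff h₀).mp h₁
    · obtain rfl : j = ⟨i + 1, hi⟩ := Fin.ext hj₁
      exact h₀
    · exact hj
  · intro h j
    simp only [sigmaAct]
    split_ifs
    · exact h _
    · exact (Int.two_mul_sub_modEq_iff (h _)).mpr (h _)
    · exact h j

end sigmaAct

theorem dvd_dgcd_iff {m : ℕ} {v : Fin m → ℤ} {c : ℤ} :
    c ∣ dgcd v ↔ ∃ b, ∀ j, v j ≡ b [ZMOD c] := by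
  simp only [dgcd, Finset.dvd_gcd_iff, Finset.mem_univ, true_imp_iff, Prod.forall, Int.modEq_iff_dvd]
  constructor
  · intro h
    rcases isEmpty_or_nonempty (Fin m) with hm | ⟨⟨j₀⟩⟩
    · exact ⟨0, fun j => isEmptyElim j⟩
    · exact ⟨v j₀, fun j => h j₀ j⟩
  · rintro ⟨b, hb⟩ j k
    simpa using dvd_sub (hb k) (hb j)

theorem dgcd_sigmaAct {m : ℕ} (i : Fin (m - 1)) (v : Fin m → ℤ) :
    dgcd (sigmaAct i v) = dgcd v := by
  have h : ∀ c, c ∣ dgcd (sigmaAct i v) ↔ c ∣ dgcd v := fun c => by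
    simp only [dvd_dgcd_iff, modEq_sigmaAct_iff]
  exact dvd_antisymm_of_normalize_eq Finset.normalize_gcd Finset.normalize_gcd
    ((h _).mp dvd_rfl) ((h _).mpr dvd_rfl)

theorem HurwitzEquiv.Delta_eq {m : ℕ} {v w : Fin m → ℤ} (h : HurwitzEquiv v w) :
    Delta v = Delta w :=
  h.eq_of_sigmaAct_invariant Delta Delta_sigmaAct

theorem HurwitzEquiv.dgcd_eq {m : ℕ} {v w : Fin m → ℤ} (h : HurwitzEquiv v w) :
    dgcd v = dgcd w :=
  h.eq_of_sigmaAct_invariant dgcd dgcd_sigmaAct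

def ofBaseDiffs (a x y : ℤ) : Fin 3 → ℤ :=
  ![a, a + x, a + y]

theorem eq_ofBaseDiffs (v : Fin 3 → ℤ) : v = ofBaseDiffs (v 0) (v 1 - v 0) (v 2 - v 0) := by
  ext j; fin_cases j <;> simp [ofBaseDiffs]

theorem Delta_ofBaseDiffs (a x y : ℤ) : Delta (ofBaseDiffs a x y) = a - x + y := by
  simp [Delta, ofBaseDiffs, Fin.sum_univ_three]
  ring

theorem dgcd_ofBaseDiffs_zero (a : ℤ) {g : ℤ} (hg : 0 ≤ g) : dgcd (ofBaseDiffs a g 0) = g := by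
  have h : ∀ c, c ∣ dgcd (ofBaseDiffs a g 0) ↔ c ∣ g := fun c => by
    rw [dvd_dgcd_iff]
    constructor
    · rintro ⟨b, hb⟩
      simpa [ofBaseDiffs, Int.modEq_iff_dvd] using (hb 1).trans (hb 0).symm
    · intro hc
      refine ⟨a, fun j => ?_⟩
      fin_cases j <;> simp [ofBaseDiffs, Int.modEq_iff_dvd, hc]
  exact dvd_antisymm_of_normalize_eq Finset.normalize_gcd (Int.normalize_of_nonneg hg)
    ((h _).mp dvd_rfl) ((h _).mpr dvd_rfl)

theorem sigmaAct_zero_ofBaseDiffs (a x y : ℤ) :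
    sigmaAct (0 : Fin 2) (ofBaseDiffs a x y) = ofBaseDiffs (a + x) x (y - x) := by
  ext j; fin_cases j <;> simp [sigmaAct, ofBaseDiffs]; ring

theorem sigmaAct_one_ofBaseDiffs (a x y : ℤ) :
    sigmaAct (1 : Fin 2) (ofBaseDiffs a x y) = ofBaseDiffs a y (2 * y - x) := by
  ext j; fin_cases j <;> simp [sigmaAct, ofBaseDiffs]; ring

theorem hurwitzEquiv_ofBaseDiffs_shift (a x y k : ℤ) :
    HurwitzEquiv (ofBaseDiffs a x y) (ofBaseDiffs (a + k * x) x (y - k * x)) := by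
  induction k using Int.induction_on with
  | zero => simpa using HurwitzEquiv.refl _
  | succ k ih =>
    refine ih.trans ?_
    convert hurwitzEquiv_sigmaAct (m := 3) 0 _ using 1
    rw [sigmaAct_zero_ofBaseDiffs]
    congr 1 <;> ring
  | pred k ih =>
    refine ih.trans (HurwitzEquiv.symm ?_)
    convert hurwitzEquiv_sigmaAct (m := 3) 0 _ using 1
    rw [sigmaAct_zero_ofBaseDiffs]
    congr 1 <;> ring

-- `(a, x, 0) ↦ (a, 0, -x) ↦ (a, -x, -2x)` by `σ₁` twice, then `σ₀²` clears the last entry.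
theorem hurwitzEquiv_ofBaseDiffs_neg (a x : ℤ) :
    HurwitzEquiv (ofBaseDiffs a x 0) (ofBaseDiffs (a - 2 * x) (-x) 0) := by
  have h₁ := hurwitzEquiv_sigmaAct (1 : Fin 2) (ofBaseDiffs a x 0)
  have h₂ := hurwitzEquiv_sigmaAct (1 : Fin 2) (ofBaseDiffs a 0 (-x))
  have h₃ := hurwitzEquiv_ofBaseDiffs_shift a (-x) (-(2 * x)) 2
  simp only [sigmaAct_one_ofBaseDiffs] at h₁ h₂
  ring_nf at h₁ h₂ h₃ ⊢
  exact h₁.trans (h₂.trans h₃)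

-- A Euclidean step on the differences: `σ₁` and then a power of `σ₀`.
theorem hurwitzEquiv_ofBaseDiffs_emod (a x y : ℤ) :
    HurwitzEquiv (ofBaseDiffs a x y)
      (ofBaseDiffs (a + (2 * y - x) / y * y) y ((2 * y - x) % y)) := by
  have h := hurwitzEquiv_ofBaseDiffs_shift a y (2 * y - x) ((2 * y - x) / y)
  rw [← sigmaAct_one_ofBaseDiffs] at h
  rw [Int.emod_def, mul_comm y]
  exact (hurwitzEquiv_sigmaAct _ _).trans h

theorem exists_hurwitzEquiv_ofBaseDiffs_zero (a x y : ℤ) :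
    ∃ a' g, 0 ≤ g ∧ HurwitzEquiv (ofBaseDiffs a x y) (ofBaseDiffs a' g 0) := by
  induction hn : y.natAbs using Nat.strong_induction_on generalizing a x y with
  | _ n ih =>
    rcases eq_or_ne y 0 with rfl | hy
    · rcases le_or_gt 0 x with hx | hx
      · exact ⟨a, x, hx, .refl _⟩
      · exact ⟨a - 2 * x, -x, by omega, hurwitzEquiv_ofBaseDiffs_neg a x⟩
    · have hlt : ((2 * y - x) % y).natAbs < n := by
        have h₁ := Int.emod_nonneg (2 * y - x) hy
        have h₂ := Int.emod_lt_abs (2 * y - x) hy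
        rw [Int.abs_eq_natAbs] at h₂
        omega
      obtain ⟨a', g, hg, h⟩ := ih _ hlt _ _ _ rfl
      exact ⟨a', g, hg, (hurwitzEquiv_ofBaseDiffs_emod a x y).trans h⟩

/-- for `v, w ∈ ℤ³`, `v ∼ w` iff `Δ(v) = Δ(w)` and `d(v) = d(w)`. -/
theorem stmt_8 (v w : Fin 3 → ℤ) :
    HurwitzEquiv v w ↔ Delta v = Delta w ∧ dgcd v = dgcd w := by
  refine ⟨fun h => ⟨h.Delta_eq, h.dgcd_eq⟩, fun ⟨hΔ, hd⟩ => ?_⟩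
  obtain ⟨a, g, hg, hv⟩ := exists_hurwitzEquiv_ofBaseDiffs_zero (v 0) (v 1 - v 0) (v 2 - v 0)
  obtain ⟨b, k, hk, hw⟩ := exists_hurwitzEquiv_ofBaseDiffs_zero (w 0) (w 1 - w 0) (w 2 - w 0)
  rw [← eq_ofBaseDiffs] at hv hw
  have hgk : g = k := by
    rwa [hv.dgcd_eq, hw.dgcd_eq, dgcd_ofBaseDiffs_zero a hg, dgcd_ofBaseDiffs_zero b hk] at hd
  have hab : a = b := by
    rw [hv.Delta_eq, hw.Delta_eq, Delta_ofBaseDiffs, Delta_ofBaseDiffs] at hΔ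
    omega
  subst hgk hab
  exact hv.trans hw.symm
end

section
/- Let k ≥ 2 and let v ∈ ℤ^{2k} be the vector (x,…,x, x+λd, x+d,…,x+d) consisting of p copies of x, then one entry x+λd, then 2k−p−1 copies of x+d, for some integers x, λ, d, p with d > 0 and 1 ≤ p ≤ 2k−2. Then for every integer n, v is Hurwitz equivalent to v + 2nd·𝟏, where 𝟏 = (1,…,1) ∈ ℤ^{2k}. -/
/-!
Hurwitz moves commute with the affine maps of `ℤ`, so it suffices to treat `x = 0`, `d = 1`.
One move turns `(0, λ)` into `(-λ, 0)`, creating an adjacent pair `(0, 1)`; sweeping a pair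
`(a, a + 1)` leftwards adds `2` to every entry it passes. Conversely, a pair in front of an even
number of entries can be carried to the back by reflections, arriving as some `(g, g + 1)`,
which `σ` slides along to `(a + 2, a + 3)`; sweeping it to the front again translates the whole
vector by `2`. Iterating gives the translation by `2n`.
-/

def IsHurwitzMove (l l' : List ℤ) : Prop :=
  ∃ (t : List ℤ) (a b : ℤ) (r : List ℤ), l = t ++ a :: b :: r ∧ l' = t ++ b :: (2 * b - a) :: r

def ListHurwitzEquiv : List ℤ → List ℤ → Prop :=
  Relation.EqvGen IsHurwitzMove

namespace ListHurwitzEquiv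

theorem refl (l : List ℤ) : ListHurwitzEquiv l l :=
  Relation.EqvGen.refl l

theorem symm {l l' : List ℤ} (h : ListHurwitzEquiv l l') : ListHurwitzEquiv l' l :=
  Relation.EqvGen.symm _ _ h

theorem trans {l₁ l₂ l₃ : List ℤ} (h₁₂ : ListHurwitzEquiv l₁ l₂) (h₂₃ : ListHurwitzEquiv l₂ l₃) :
    ListHurwitzEquiv l₁ l₃ :=
  Relation.EqvGen.trans _ _ _ h₁₂ h₂₃

theorem move (t : List ℤ) (a b : ℤ) (r : List ℤ) :
    ListHurwitzEquiv (t ++ a :: b :: r) (t ++ b :: (2 * b - a) :: r) :=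
  Relation.EqvGen.rel _ _ ⟨t, a, b, r, rfl, rfl⟩

theorem move_head (a b : ℤ) (r : List ℤ) :
    ListHurwitzEquiv (a :: b :: r) (b :: (2 * b - a) :: r) :=
  move [] a b r

theorem length_eq {l l' : List ℤ} (h : ListHurwitzEquiv l l') : l.length = l'.length := by
  induction h with
  | rel _ _ h => obtain ⟨t, a, b, r, rfl, rfl⟩ := h; simp
  | refl => rfl
  | symm _ _ _ ih => exact ih.symm
  | trans _ _ _ _ _ ih₁ ih₂ => exact ih₁.trans ih₂

theorem append_left {l l' : List ℤ} (s : List ℤ) (h : ListHurwitzEquiv l l') :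
    ListHurwitzEquiv (s ++ l) (s ++ l') := by
  induction h with
  | rel _ _ h =>
    obtain ⟨t, a, b, r, rfl, rfl⟩ := h
    simpa only [List.append_assoc] using move (s ++ t) a b r
  | refl => exact refl _
  | symm _ _ _ ih => exact ih.symm
  | trans _ _ _ _ _ ih₁ ih₂ => exact ih₁.trans ih₂

theorem cons {l l' : List ℤ} (u : ℤ) (h : ListHurwitzEquiv l l') :
    ListHurwitzEquiv (u :: l) (u :: l') :=
  h.append_left [u]

theorem map {l l' : List ℤ} (f : ℤ → ℤ) (hf : ∀ a b, f (2 * b - a) = 2 * f b - f a)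
    (h : ListHurwitzEquiv l l') : ListHurwitzEquiv (l.map f) (l'.map f) := by
  induction h with
  | rel _ _ h =>
    obtain ⟨t, a, b, r, rfl, rfl⟩ := h
    simpa only [List.map_append, List.map_cons, hf] using move (t.map f) (f a) (f b) (r.map f)
  | refl => exact refl _
  | symm _ _ _ ih => exact ih.symm
  | trans _ _ _ _ _ ih₁ ih₂ => exact ih₁.trans ih₂

theorem map_add {l l' : List ℤ} (c : ℤ) (h : ListHurwitzEquiv l l') :
    ListHurwitzEquiv (l.map (· + c)) (l'.map (· + c)) :=
  h.map _ fun a b => by ring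

theorem pair_pass_left (u a e : ℤ) (r : List ℤ) :
    ListHurwitzEquiv (u :: a :: (a + e) :: r) (a :: (a + e) :: (u + 2 * e) :: r) := by
  have h₂ := (move_head (2 * a - u) (a + e) r).cons a
  rw [show 2 * (a + e) - (2 * a - u) = u + 2 * e by ring] at h₂
  exact (move_head u a _).trans h₂

theorem append_pair (L : List ℤ) (a e : ℤ) (r : List ℤ) :
    ListHurwitzEquiv (L ++ a :: (a + e) :: r) (a :: (a + e) :: (L.map (· + 2 * e) ++ r)) := by
  induction L with
  | nil => exact refl _
  | cons u L ih => exact (ih.cons u).trans (pair_pass_left u a e _)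

theorem flip_pass (a b u : ℤ) (r : List ℤ) :
    ListHurwitzEquiv (a :: b :: u :: r) (u :: (2 * u - a) :: (2 * u - b) :: r) :=
  (move [a] b u r).trans (move_head a u _)

/-- Two reflections in a row translate the pair, so its difference `e` survives the passage. -/
theorem exists_pair_pass_right (a e : ℤ) :
    ∀ L : List ℤ, Even L.length →
      ∃ g, ListHurwitzEquiv (a :: (a + e) :: L) (L ++ [g, g + e])
  | [], _ => ⟨a, refl _⟩
  | [_], hL => absurd hL (by simp)
  | u₁ :: u₂ :: L, hL => by
    obtain ⟨g, hg⟩ :=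
      exists_pair_pass_right (a + 2 * (u₂ - u₁)) e L (by simpa [Nat.even_add_one] using hL)
    refine ⟨g, ((flip_pass a (a + e) u₁ _).trans ?_).trans ((hg.cons u₂).cons u₁)⟩
    refine ((flip_pass _ _ u₂ L).cons u₁).trans ?_
    rw [show 2 * u₂ - (2 * u₁ - a) = a + 2 * (u₂ - u₁) by ring,
      show 2 * u₂ - (2 * u₁ - (a + e)) = a + 2 * (u₂ - u₁) + e by ring]
    exact refl _

theorem pair_step (a e : ℤ) (r : List ℤ) :
    ListHurwitzEquiv (a :: (a + e) :: r) ((a + e) :: (a + e + e) :: r) := by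
  simpa only [show 2 * (a + e) - a = a + e + e by ring] using move_head a (a + e) r

theorem pair_shift (a e t : ℤ) (r : List ℤ) :
    ListHurwitzEquiv (a :: (a + e) :: r) ((a + t * e) :: (a + t * e + e) :: r) := by
  induction t using Int.induction_on with
  | zero => simpa using refl _
  | succ i ih =>
    rw [show a + (i + 1) * e = a + i * e + e by ring]
    exact ih.trans (pair_step _ e r)
  | pred i ih =>
    have h := pair_step (a + (-i - 1) * e) e r
    rw [show a + (-i - 1) * e + e = a + -i * e by ring] at h ⊢
    exact ih.trans h.symm

theorem unit_pair_shift_two (a : ℤ) {L : List ℤ} (hL : Even L.length) :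
    ListHurwitzEquiv (a :: (a + 1) :: L) ((a :: (a + 1) :: L).map (· + 2)) := by
  obtain ⟨g, h_pass⟩ := exists_pair_pass_right a 1 L hL
  have h_shift := (pair_shift g 1 (a + 2 - g) []).append_left L
  rw [show g + (a + 2 - g) * 1 = a + 2 by ring] at h_shift
  simpa [add_assoc] using h_pass.trans (h_shift.trans (append_pair L (a + 2) 1 []))

theorem map_add_mul {l : List ℤ} {s : ℤ} (h : ListHurwitzEquiv l (l.map (· + s))) (n : ℤ) :
    ListHurwitzEquiv l (l.map (· + n * s)) := by
  induction n using Int.induction_on with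
  | zero => simpa using refl l
  | succ i ih =>
    simpa [List.map_map, Function.comp_def, add_mul, add_assoc, add_comm s]
      using ih.trans (h.map_add (i * s))
  | pred i ih =>
    refine ih.trans (ListHurwitzEquiv.symm ?_)
    simpa [List.map_map, Function.comp_def, sub_mul, add_assoc, add_comm s]
      using h.map_add ((-i - 1) * s)

end ListHurwitzEquiv

theorem listHurwitzEquiv_replicate_map_add (p q : ℕ) (hpq : Even (p + 1 + q)) (lam n : ℤ) :
    ListHurwitzEquiv (List.replicate (p + 1) 0 ++ lam :: List.replicate (q + 1) 1)
      ((List.replicate (p + 1) 0 ++ lam :: List.replicate (q + 1) 1).map (· + 2 * n)) := by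
  have h_move : ListHurwitzEquiv (List.replicate p 0 ++ -lam :: 0 :: 1 :: List.replicate q 1)
      (List.replicate (p + 1) 0 ++ lam :: List.replicate (q + 1) 1) := by
    rw [List.replicate_succ', List.replicate_succ (n := q)]
    simpa using ListHurwitzEquiv.move (List.replicate p 0) (-lam) 0 (1 :: List.replicate q 1)
  have h_sweep := ListHurwitzEquiv.append_pair (List.replicate p 0 ++ [-lam]) 0 1
    (List.replicate q 1)
  simp only [List.append_assoc, List.singleton_append, zero_add, mul_one] at h_sweep
  set L := (List.replicate p 0 ++ [-lam]).map (· + 2) ++ List.replicate q 1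
  have hL : Even L.length := by simpa [L, add_assoc, add_comm 1 q] using hpq
  have h_shift : ListHurwitzEquiv (0 :: 1 :: L) ((0 :: 1 :: L).map (· + 2 * n)) := by
    rw [mul_comm]
    simpa only [zero_add] using
      ListHurwitzEquiv.map_add_mul (ListHurwitzEquiv.unit_pair_shift_two 0 hL) n
  have h_equiv := h_move.symm.trans h_sweep
  exact (h_equiv.trans h_shift).trans (h_equiv.map_add (2 * n)).symm

theorem List.getD_append_cons_cons {α : Type*} (t r : List α) (a b d : α) (j : ℕ) :
    (t ++ a :: b :: r).getD j d =
      if j < t.length then t.getD j d else if j = t.length then a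
      else if j = t.length + 1 then b else r.getD (j - t.length - 2) d := by
  rcases lt_or_ge j t.length with hj | hj
  · rw [if_pos hj, List.getD_append _ _ _ _ hj]
  · rw [List.getD_append_right _ _ _ _ hj]
    obtain ⟨i, rfl⟩ := Nat.exists_eq_add_of_le hj
    rcases i with _ | _ | i <;> simp

theorem List.ofFn_ite_lt_eq {α : Type*} {m p q : ℕ} (hm : p + 1 + q = m) (x y z : α) :
    List.ofFn (fun j : Fin m => if (j : ℕ) < p then x else if (j : ℕ) = p then y else z) =
      List.replicate p x ++ y :: List.replicate q z := by
  subst hm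
  refine List.ext_getElem (by simp; omega) fun j h₁ h₂ => ?_
  simp only [List.getElem_ofFn, List.getElem_append, List.getElem_cons, List.getElem_replicate,
    List.length_replicate]
  split_ifs <;> first | rfl | omega

theorem IsHurwitzMove.exists_getD_eq_sigmaAct {m : ℕ} {l l' : List ℤ} (h : IsHurwitzMove l l')
    (hl : l.length = m) :
    ∃ i : Fin (m - 1), (fun j : Fin m => l'.getD j 0) = sigmaAct i (fun j => l.getD j 0) := by
  obtain ⟨t, a, b, r, rfl, rfl⟩ := h
  simp only [List.length_append, List.length_cons] at hl
  refine ⟨⟨t.length, by omega⟩, funext fun j => ?_⟩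
  simp only [sigmaAct, List.getD_append_cons_cons]
  split_ifs <;> first | rfl | omega

theorem HurwitzEquiv.of_ofFn {m : ℕ} {v w : Fin m → ℤ}
    (h : ListHurwitzEquiv (List.ofFn v) (List.ofFn w)) : HurwitzEquiv v w := by
  suffices key : ∀ {l l' : List ℤ}, ListHurwitzEquiv l l' → l.length = m →
      HurwitzEquiv (fun j : Fin m => l.getD j 0) (fun j => l'.getD j 0) by
    simpa [List.getD_eq_getElem] using key h List.length_ofFn
  intro l l' h hl
  induction h with
  | rel l l' h => exact Relation.EqvGen.rel _ _ (h.exists_getD_eq_sigmaAct hl)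
  | refl => exact Relation.EqvGen.refl _
  | symm l l' h ih => exact Relation.EqvGen.symm _ _ (ih (ListHurwitzEquiv.length_eq h ▸ hl))
  | trans l₁ l₂ l₃ h₁₂ _ ih₁₂ ih₂₃ =>
    exact Relation.EqvGen.trans _ _ _ (ih₁₂ hl) (ih₂₃ (ListHurwitzEquiv.length_eq h₁₂ ▸ hl))

theorem stmt_9_general (k : ℕ) (x lam d : ℤ) (p : ℕ)
    (hp1 : 1 ≤ p) (hp2 : p ≤ 2 * k - 2) (n : ℤ) :
    HurwitzEquiv
      (fun j : Fin (2 * k) =>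
        if (j : ℕ) < p then x else if (j : ℕ) = p then x + lam * d else x + d)
      (fun j : Fin (2 * k) =>
        (if (j : ℕ) < p then x else if (j : ℕ) = p then x + lam * d else x + d)
          + 2 * n * d) := by
  obtain ⟨p, rfl⟩ : ∃ p', p = p' + 1 := ⟨p - 1, by omega⟩
  obtain ⟨q, hq⟩ : ∃ q, p + 1 + 1 + (q + 1) = 2 * k := ⟨2 * k - p - 3, by omega⟩
  have h_affine : ∀ a b : ℤ, x + (2 * b - a) * d = 2 * (x + b * d) - (x + a * d) :=
    fun a b => by ring
  have h := (listHurwitzEquiv_replicate_map_add p q ⟨k - 1, by omega⟩ lam n).map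
    (fun u => x + u * d) h_affine
  refine HurwitzEquiv.of_ofFn (List.map_ofFn (g := (· + 2 * n * d)) ▸ ?_)
  rw [List.ofFn_ite_lt_eq hq]
  convert h using 1
  · simp
  · simp [add_mul, add_assoc]

/-- for `v = (x,…,x, x+λd, x+d,…,x+d) ∈ ℤ^{2k}` (`p` copies of `x`,
one `x+λd`, `2k−p−1` copies of `x+d`, `d > 0`, `1 ≤ p ≤ 2k−2`), `v` is Hurwitz
equivalent to `v + 2nd·𝟏` for every integer `n`. -/
theorem stmt_9 (k : ℕ) (hk : 2 ≤ k) (x lam d : ℤ) (p : ℕ) (hd : 0 < d)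
    (hp1 : 1 ≤ p) (hp2 : p ≤ 2 * k - 2) (n : ℤ) :
    HurwitzEquiv
      (fun j : Fin (2 * k) =>
        if (j : ℕ) < p then x else if (j : ℕ) = p then x + lam * d else x + d)
      (fun j : Fin (2 * k) =>
        (if (j : ℕ) < p then x else if (j : ℕ) = p then x + lam * d else x + d)
          + 2 * n * d) :=
  stmt_9_general k x lam d p hp1 hp2 n
end

section
/- Let m ≥ 2 and let v = (a_1,…,a_m), w = (b_1,…,b_m) ∈ ℤ^m satisfy w = v·β for some virtual braid word β on m strands. Then: (i) d(v) = d(w); (ii) Δ(v) ≡ Δ(w) (mod 2d(v)); (iii) b_{π_β(i)} ≡ a_i (mod 2d(v)) for every i = 1,…,m; (iv) M(v)_{2d(v)} = M(w)_{2d(w)}. (Congruence mod 0 means equality in ℤ.) -/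
section

variable {m : ℕ}

def leftStrand (i : Fin (m - 1)) : Fin m := ⟨i, by have := i.isLt; omega⟩

def rightStrand (i : Fin (m - 1)) : Fin m := ⟨i + 1, by have := i.isLt; omega⟩

lemma leftStrand_ne_rightStrand (i : Fin (m - 1)) : leftStrand i ≠ rightStrand i := by
  simp [leftStrand, rightStrand, Fin.ext_iff]

lemma letterPerm_eq_swap (i : Fin (m - 1)) :
    letterPerm i = Equiv.swap (leftStrand i) (rightStrand i) := rfl

lemma dgcd_dvd_sub (v : Fin m → ℤ) (j k : Fin m) : dgcd v ∣ v j - v k :=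
  Finset.gcd_dvd (Finset.mem_univ (j, k))

lemma dgcd_nonneg (v : Fin m → ℤ) : 0 ≤ dgcd v := by
  rw [dgcd, ← Finset.normalize_gcd, ← Int.abs_eq_normalize]
  exact abs_nonneg _

lemma dgcd_dvd_dgcd_of_dvd_comp_sub {v w : Fin m → ℤ} (π : Equiv.Perm (Fin m))
    (h : ∀ j, dgcd v ∣ w (π j) - v j) : dgcd v ∣ dgcd w := by
  refine Finset.dvd_gcd fun ⟨j, k⟩ _ => ?_
  obtain ⟨j, rfl⟩ := π.surjective j
  obtain ⟨k, rfl⟩ := π.surjective k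
  have e : w (π j) - w (π k) = (w (π j) - v j) - (w (π k) - v k) + (v j - v k) := by ring
  exact e ▸ dvd_add (dvd_sub (h j) (h k)) (dgcd_dvd_sub v j k)

lemma dgcd_eq_of_dvd_comp_sub {v w : Fin m → ℤ} (π : Equiv.Perm (Fin m))
    (hv : ∀ j, dgcd v ∣ w (π j) - v j) (hw : ∀ j, dgcd w ∣ w (π j) - v j) :
    dgcd v = dgcd w := by
  refine Int.dvd_antisymm (dgcd_nonneg v) (dgcd_nonneg w)
    (dgcd_dvd_dgcd_of_dvd_comp_sub π hv) (dgcd_dvd_dgcd_of_dvd_comp_sub π.symm fun j => ?_)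
  obtain ⟨j, rfl⟩ := π.surjective j
  rw [Equiv.symm_apply_apply, ← neg_sub]
  exact (hw j).neg_right

lemma resM_eq_of_modEq_comp {v w : Fin m → ℤ} {N : ℤ} (π : Equiv.Perm (Fin m))
    (h : ∀ j, w (π j) ≡ v j [ZMOD N]) : resM w N = resM v N := by
  rw [resM, ← Multiset.map_univ_val_equiv π, Multiset.map_map]
  exact Multiset.map_congr rfl fun j _ => h j

lemma Delta_sub_of_eq_of_ne {v w : Fin m → ℤ} (i : Fin (m - 1))
    (h : ∀ j, j ≠ leftStrand i → j ≠ rightStrand i → w j = v j) :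
    Delta w - Delta v = (-1) ^ (i : ℕ) *
      ((w (leftStrand i) - v (leftStrand i)) - (w (rightStrand i) - v (rightStrand i))) := by
  rw [Delta, Delta, ← Finset.sum_sub_distrib,
    Fintype.sum_eq_add _ _ (leftStrand_ne_rightStrand i) fun j ⟨hl, hr⟩ => by simp [h j hl hr]]
  simp only [leftStrand, rightStrand, pow_succ]
  ring

section Letter

variable (l : VBraidLetter m) (v : Fin m → ℤ)

lemma vletterAct_of_ne {j : Fin m} (hl : j ≠ leftStrand l.1) (hr : j ≠ rightStrand l.1) :
    vletterAct l v j = v j := by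
  have hl' : (j : ℕ) ≠ l.1 := fun h => hl (Fin.ext h)
  have hr' : (j : ℕ) ≠ l.1 + 1 := fun h => hr (Fin.ext h)
  obtain ⟨i, _ | _ | _⟩ := l <;> simp [vletterAct, tauAct, sigmaAct, sigmaInvAct, hl', hr']

lemma abs_vletterAct_rightStrand_sub_leftStrand :
    |vletterAct l v (rightStrand l.1) - vletterAct l v (leftStrand l.1)| =
      |v (rightStrand l.1) - v (leftStrand l.1)| := by
  obtain ⟨i, _ | _ | _⟩ := l <;>
    simp [vletterAct, tauAct, sigmaAct, sigmaInvAct, leftStrand, rightStrand]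
  all_goals first | exact abs_sub_comm _ _ | (congr 1; ring)

lemma two_mul_sub_dvd_vletterAct_letterPerm_sub (j : Fin m) :
    2 * (v (rightStrand l.1) - v (leftStrand l.1)) ∣
      vletterAct l v (letterPerm l.1 j) - v j := by
  rw [letterPerm_eq_swap]
  rcases eq_or_ne j (leftStrand l.1) with rfl | hl
  · rw [Equiv.swap_apply_left]
    obtain ⟨i, _ | _ | _⟩ := l <;>
      simp [vletterAct, tauAct, sigmaAct, sigmaInvAct, leftStrand, rightStrand]
    exact ⟨1, by ring⟩
  rcases eq_or_ne j (rightStrand l.1) with rfl | hr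
  · rw [Equiv.swap_apply_right]
    obtain ⟨i, _ | _ | _⟩ := l <;>
      simp [vletterAct, tauAct, sigmaAct, sigmaInvAct, leftStrand, rightStrand]
    exact ⟨-1, by ring⟩
  rw [Equiv.swap_apply_of_ne_of_ne hl hr, vletterAct_of_ne l v hl hr, sub_self]
  exact dvd_zero _

lemma two_mul_dgcd_dvd_vletterAct_letterPerm_sub (j : Fin m) :
    2 * dgcd v ∣ vletterAct l v (letterPerm l.1 j) - v j :=
  (mul_dvd_mul_left 2 (dgcd_dvd_sub v _ _)).trans
    (two_mul_sub_dvd_vletterAct_letterPerm_sub l v j)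

lemma dgcd_vletterAct : dgcd (vletterAct l v) = dgcd v := by
  refine (dgcd_eq_of_dvd_comp_sub (letterPerm l.1) (fun j => ?_) (fun j => ?_)).symm
  · exact (dvd_mul_left _ 2).trans (two_mul_dgcd_dvd_vletterAct_letterPerm_sub l v j)
  · refine (dvd_mul_of_dvd_right ?_ 2).trans (two_mul_sub_dvd_vletterAct_letterPerm_sub l v j)
    rw [← dvd_abs, ← abs_vletterAct_rightStrand_sub_leftStrand, dvd_abs]
    exact dgcd_dvd_sub _ _ _

lemma two_mul_dgcd_dvd_Delta_vletterAct_sub :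
    2 * dgcd v ∣ Delta (vletterAct l v) - Delta v := by
  set w := vletterAct l v
  have hl := two_mul_dgcd_dvd_vletterAct_letterPerm_sub l v (leftStrand l.1)
  have hr := two_mul_dgcd_dvd_vletterAct_letterPerm_sub l v (rightStrand l.1)
  rw [letterPerm_eq_swap, Equiv.swap_apply_left] at hl
  rw [letterPerm_eq_swap, Equiv.swap_apply_right] at hr
  rw [Delta_sub_of_eq_of_ne l.1 fun j => vletterAct_of_ne l v]
  have e :
      (w (leftStrand l.1) - v (leftStrand l.1)) - (w (rightStrand l.1) - v (rightStrand l.1)) =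
      (w (leftStrand l.1) - v (rightStrand l.1)) - (w (rightStrand l.1) - v (leftStrand l.1)) +
        2 * (v (rightStrand l.1) - v (leftStrand l.1)) := by ring
  rw [e]
  exact (dvd_add (dvd_sub hr hl) (mul_dvd_mul_left 2 (dgcd_dvd_sub v _ _))).mul_left _

end Letter

section Word

variable (β : List (VBraidLetter m)) (v : Fin m → ℤ)

lemma vwordAct_concat (l : VBraidLetter m) :
    vwordAct (β ++ [l]) v = vletterAct l (vwordAct β v) := by
  simp [vwordAct]

lemma vwordPerm_concat (l : VBraidLetter m) :
    vwordPerm (β ++ [l]) = letterPerm l.1 * vwordPerm β := by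
  simp [vwordPerm]

lemma dgcd_vwordAct : dgcd (vwordAct β v) = dgcd v := by
  induction β using List.reverseRecOn with
  | nil => rfl
  | append_singleton β l ih => rw [vwordAct_concat, dgcd_vletterAct, ih]

lemma vwordAct_vwordPerm_modEq (j : Fin m) :
    vwordAct β v (vwordPerm β j) ≡ v j [ZMOD 2 * dgcd v] := by
  induction β using List.reverseRecOn with
  | nil => rfl
  | append_singleton β l ih =>
    rw [vwordAct_concat, vwordPerm_concat, Equiv.Perm.mul_apply]
    refine Int.ModEq.trans ?_ ih
    rw [← dgcd_vwordAct β v]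
    exact (Int.modEq_iff_dvd.2 (two_mul_dgcd_dvd_vletterAct_letterPerm_sub l _ _)).symm

lemma Delta_vwordAct_modEq : Delta (vwordAct β v) ≡ Delta v [ZMOD 2 * dgcd v] := by
  induction β using List.reverseRecOn with
  | nil => rfl
  | append_singleton β l ih =>
    rw [vwordAct_concat]
    refine Int.ModEq.trans ?_ ih
    rw [← dgcd_vwordAct β v]
    exact (Int.modEq_iff_dvd.2 (two_mul_dgcd_dvd_Delta_vletterAct_sub l _)).symm

end Word

end

theorem stmt_15_general (m : ℕ) (v : Fin m → ℤ) (β : List (VBraidLetter m)) :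
    dgcd v = dgcd (vwordAct β v) ∧
    Delta v ≡ Delta (vwordAct β v) [ZMOD 2 * dgcd v] ∧
    (∀ i : Fin m, vwordAct β v (vwordPerm β i) ≡ v i [ZMOD 2 * dgcd v]) ∧
    resM v (2 * dgcd v) = resM (vwordAct β v) (2 * dgcd (vwordAct β v)) := by
  rw [dgcd_vwordAct]
  exact ⟨rfl, (Delta_vwordAct_modEq β v).symm, vwordAct_vwordPerm_modEq β v,
    (resM_eq_of_modEq_comp _ (vwordAct_vwordPerm_modEq β v)).symm⟩

/-- invariance under virtual braid words: if `w = v·β` then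
(i) `d(v) = d(w)`; (ii) `Δ(v) ≡ Δ(w) (mod 2d(v))`;
(iii) `b_{π_β(i)} ≡ a_i (mod 2d(v))` for all `i`; (iv) `M(v)_{2d(v)} = M(w)_{2d(w)}`. -/
theorem stmt_15 (m : ℕ) (hm : 2 ≤ m) (v : Fin m → ℤ) (β : List (VBraidLetter m)) :
    dgcd v = dgcd (vwordAct β v) ∧
    Delta v ≡ Delta (vwordAct β v) [ZMOD 2 * dgcd v] ∧
    (∀ i : Fin m, vwordAct β v (vwordPerm β i) ≡ v i [ZMOD 2 * dgcd v]) ∧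
    resM v (2 * dgcd v) = resM (vwordAct β v) (2 * dgcd (vwordAct β v)) :=
  stmt_15_general m v β
end
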